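/- If t > 0 and the holomorphic quadratic differential φ is not identically zero, then every Γ-invariant C² solution u of the Gauss equation Δu + 1 − e^{2u} − t²y⁴|φ(z)|²e^{−2u} = 0 satisfies the strict inequality u(z) < 0 for all z ∈ ℍ. -/

import Mathlib

open Complex MeasureTheory Real Filter

noncomputable section

/-- The upper half-plane, viewed as a subset of `ℂ`. -/
def UH : Set ℂ := {z : ℂ | 0 < z.im}

/-- The Möbius action of `SL(2, ℝ)` on the upper half-plane (as a map on `ℂ`). -/
def moebius (γ : Matrix.SpecialLinearGroup (Fin 2) ℝ) (z : ℂ) : ℂ :=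
  (((γ 0 0 : ℝ) : ℂ) * z + ((γ 0 1 : ℝ) : ℂ)) / (((γ 1 0 : ℝ) : ℂ) * z + ((γ 1 1 : ℝ) : ℂ))

/-- The hyperbolic Laplacian `Δu = y² (∂²u/∂x² + ∂²u/∂y²)`. -/
def hypLap (u : ℂ → ℝ) (z : ℂ) : ℝ :=
  z.im ^ 2 * (iteratedFDeriv ℝ 2 u z ![1, 1] + iteratedFDeriv ℝ 2 u z ![Complex.I, Complex.I])

/-- The squared Euclidean gradient `|∇u|² = (∂u/∂x)² + (∂u/∂y)²`. -/
def gradSq (u : ℂ → ℝ) (z : ℂ) : ℝ :=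
  (fderiv ℝ u z 1) ^ 2 + (fderiv ℝ u z Complex.I) ^ 2

/-- `u` is invariant under the Möbius action of the subgroup `Γ` on the upper half-plane. -/
def GammaInv (Γ : Subgroup (Matrix.SpecialLinearGroup (Fin 2) ℝ)) (u : ℂ → ℝ) : Prop :=
  ∀ γ ∈ Γ, ∀ z ∈ UH, u (moebius γ z) = u z

/-- The Gauss equation `Δu + 1 - e^{2u} - t² y⁴ |φ(z)|² e^{-2u} = 0` on the upper half-plane. -/
def GaussEq (φ : ℂ → ℂ) (t : ℝ) (u : ℂ → ℝ) : Prop :=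
  ∀ z ∈ UH, hypLap u z + 1 - Real.exp (2 * u z)
    - t ^ 2 * z.im ^ 4 * ‖φ z‖ ^ 2 * Real.exp (-2 * u z) = 0

/-- Integral over a fundamental domain `D` with respect to the hyperbolic
area measure `dμ = y⁻² dx dy`. -/
def hInt (D : Set ℂ) (f : ℂ → ℝ) : ℝ := ∫ z in D, f z * (z.im ^ 2)⁻¹

/-!
Cocompactness and `Γ`-invariance let `u` attain its maximum over `ℍ`; there `Δu ≤ 0`, so the
equation forces `e^{2u} ≤ 1`, i.e. `u ≤ 0` everywhere. Since `e^{2u} ≥ 1 + 2u`, the Euclidean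
Laplacian then satisfies `Δu ≥ (2 / y²) u`, and the strong maximum principle (via Hopf's
boundary-point lemma with the barrier `exp (-α |z - w|²)`) shows that `u ≡ 0` as soon as `u`
vanishes at one point. But for `u ≡ 0` the equation reads `t² y⁴ |φ|² = 0`, contradicting `t > 0`
and `φ ≢ 0`.
-/

open InnerProductSpace Laplacian Metric Set Topology

section LocalMax

variable {E : Type*} [NormedAddCommGroup E] [NormedSpace ℝ E]

theorem IsLocalMax.deriv_deriv_nonpos {f : ℝ → ℝ} {a : ℝ} (h : IsLocalMax f a)
    (hf : ContinuousAt f a) : deriv (deriv f) a ≤ 0 := by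
  by_contra! hpos
  have hmin : IsLocalMin f a := isLocalMin_of_deriv_deriv_pos hpos h.deriv_eq_zero hf
  have hconst : f =ᶠ[𝓝 a] fun _ => f a := (h.and hmin).mono fun x hx => le_antisymm hx.1 hx.2
  simp [hconst.deriv.deriv_eq] at hpos

theorem ContDiffAt.iteratedFDeriv_two_eq_deriv_deriv_line {u : E → ℝ} {x : E}
    (hu : ContDiffAt ℝ 2 u x) (v : E) :
    iteratedFDeriv ℝ 2 u x ![v, v] = deriv (deriv fun s : ℝ => u (x + s • v)) 0 := by
  have hline : ∀ s : ℝ, HasDerivAt (fun s : ℝ => x + s • v) v s := fun s => by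
    simpa using ((hasDerivAt_id s).smul_const v).const_add x
  have hlim : Tendsto (fun s : ℝ => x + s • v) (𝓝 0) (𝓝 x) := by
    simpa using (hline 0).continuousAt.tendsto
  have hderiv : deriv (fun s : ℝ => u (x + s • v)) =ᶠ[𝓝 0]
      fun s => fderiv ℝ u (x + s • v) v := by
    filter_upwards [hlim.eventually (hu.eventually (by simp))] with s hs
    exact ((hs.differentiableAt (by simp)).hasFDerivAt.comp_hasDerivAt s (hline s)).deriv
  have hu' : DifferentiableAt ℝ (fderiv ℝ u) x :=
    (hu.fderiv_right (m := 1) le_rfl).differentiableAt (by simp)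
  have h2 : HasDerivAt (fun s : ℝ => fderiv ℝ u (x + s • v) v)
      (fderiv ℝ (fderiv ℝ u) x v v) 0 :=
    (ContinuousLinearMap.apply ℝ ℝ v).hasFDerivAt.comp_hasDerivAt 0
      (hu'.hasFDerivAt.comp_hasDerivAt_of_eq 0 (hline 0) (by simp))
  rw [iteratedFDeriv_two_apply, hderiv.deriv_eq, h2.deriv]
  rfl

theorem IsLocalMax.iteratedFDeriv_two_nonpos {u : E → ℝ} {x : E} (h : IsLocalMax u x)
    (hu : ContDiffAt ℝ 2 u x) (v : E) : iteratedFDeriv ℝ 2 u x ![v, v] ≤ 0 := by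
  have hlim : Tendsto (fun s : ℝ => x + s • v) (𝓝 0) (𝓝 x) :=
    (by fun_prop : Continuous fun s : ℝ => x + s • v).tendsto' 0 x (by simp)
  rw [hu.iteratedFDeriv_two_eq_deriv_deriv_line]
  refine IsLocalMax.deriv_deriv_nonpos ?_ (hu.continuousAt.comp_of_eq (by fun_prop) (by simp))
  simpa [IsLocalMax, IsMaxFilter] using hlim.eventually h

end LocalMax

section Laplacian

variable {E : Type*} [NormedAddCommGroup E] [InnerProductSpace ℝ E] [FiniteDimensional ℝ E]

theorem IsLocalMax.laplacian_nonpos {u : E → ℝ} {x : E} (h : IsLocalMax u x)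
    (hu : ContDiffAt ℝ 2 u x) : Δ u x ≤ 0 := by
  rw [laplacian_eq_iteratedFDeriv_stdOrthonormalBasis]
  exact Finset.sum_nonpos fun i _ => h.iteratedFDeriv_two_nonpos hu _

end Laplacian

section Gaussian

variable {E : Type*} [NormedAddCommGroup E]

def gaussian (α : ℝ) (w z : E) : ℝ := Real.exp (-α * ‖z - w‖ ^ 2)

variable {α : ℝ} {w : E}

theorem gaussian_pos (z : E) : 0 < gaussian α w z := Real.exp_pos _

theorem gaussian_le_one (hα : 0 ≤ α) (z : E) : gaussian α w z ≤ 1 :=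
  Real.exp_le_one_iff.2 (by have := sq_nonneg ‖z - w‖; nlinarith)

variable [InnerProductSpace ℝ E]

theorem contDiff_gaussian {n : WithTop ℕ∞} : ContDiff ℝ n (gaussian α w) :=
  (contDiff_const.mul ((contDiff_id.sub contDiff_const).norm_sq ℝ)).exp

theorem hasFDerivAt_gaussian (z : E) :
    HasFDerivAt (gaussian α w) ((-2 * α * gaussian α w z) • innerSL ℝ (z - w)) z := by
  refine (((hasFDerivAt_id z).sub_const w).norm_sq.const_mul (-α)).exp.congr_fderiv ?_
  ext v
  simp [gaussian]
  ring

theorem iteratedFDeriv_two_gaussian (z v : E) :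
    iteratedFDeriv ℝ 2 (gaussian α w) z ![v, v]
      = (4 * α ^ 2 * inner ℝ (z - w) v ^ 2 - 2 * α * ‖v‖ ^ 2) * gaussian α w z := by
  rw [contDiff_gaussian.contDiffAt.iteratedFDeriv_two_eq_deriv_deriv_line]
  have hline : ∀ s : ℝ, HasDerivAt (fun s : ℝ => z - w + s • v) v s := fun s => by
    simpa using ((hasDerivAt_id s).smul_const v).const_add (z - w)
  have h1 : ∀ s : ℝ, HasDerivAt (fun s : ℝ => gaussian α w (z + s • v))
      (gaussian α w (z + s • v) * (-α * (2 * inner ℝ (z - w + s • v) v))) s := fun s => by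
    simpa [gaussian, add_sub_right_comm] using (((hline s).norm_sq).const_mul (-α)).exp
  have h2 := (h1 0).fun_mul
    ((((hline 0).inner ℝ (hasDerivAt_const 0 v)).const_mul 2).const_mul (-α))
  rw [funext fun s => (h1 s).deriv, h2.deriv]
  simp
  ring

theorem laplacian_gaussian [FiniteDimensional ℝ E] (z : E) :
    Δ (gaussian α w) z
      = (4 * α ^ 2 * ‖z - w‖ ^ 2 - 2 * Module.finrank ℝ E * α) * gaussian α w z := by
  rw [laplacian_eq_iteratedFDeriv_stdOrthonormalBasis]
  simp only [iteratedFDeriv_two_gaussian, ← Finset.sum_mul, Finset.sum_sub_distrib,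
    ← Finset.mul_sum, (stdOrthonormalBasis ℝ E).sum_sq_inner_left, OrthonormalBasis.norm_eq_one,
    Finset.sum_const, Finset.card_univ, Fintype.card_fin, nsmul_eq_mul]
  ring

end Gaussian

section Hopf

variable {E : Type*} [NormedAddCommGroup E] [InnerProductSpace ℝ E] [FiniteDimensional ℝ E]
  {u : E → ℝ} {w : E} {r c α : ℝ}

theorem mul_gaussian_le_laplacian_gaussian (hr : 0 ≤ r)
    (hαr : 2 * Module.finrank ℝ E * α + c ≤ α ^ 2 * r ^ 2) {z : E} (hz : r / 2 ≤ dist z w) :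
    c * gaussian α w z ≤ Δ (gaussian α w) z := by
  rw [laplacian_gaussian, ← dist_eq_norm]
  refine mul_le_mul_of_nonneg_right ?_ (gaussian_pos z).le
  have : r ^ 2 ≤ 4 * dist z w ^ 2 := by nlinarith [dist_nonneg (x := z) (y := w)]
  nlinarith [sq_nonneg α]

theorem add_smul_gaussian_le_on_annulus {ε : ℝ} (hc : 0 < c) (hε : 0 < ε) (hα : 0 ≤ α)
    (hαr : 2 * Module.finrank ℝ E * α + c ≤ α ^ 2 * r ^ 2)
    (hu : ∀ z ∈ closedBall w r, ContDiffAt ℝ 2 u z)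
    (hΔ : ∀ z ∈ closedBall w r, c * u z ≤ Δ u z)
    (houter : ∀ z ∈ sphere w r, u z ≤ 0) (hinner : ∀ z ∈ sphere w (r / 2), u z ≤ -ε) :
    ∀ z ∈ closedBall w r \ ball w (r / 2),
      u z + ε * gaussian α w z ≤ ε * Real.exp (-α * r ^ 2) := by
  set v : E → ℝ := u + ε • gaussian α w
  set A := closedBall w r \ ball w (r / 2)
  rcases A.eq_empty_or_nonempty with hA | hA
  · simp [hA]
  have hvcont : ContinuousOn v A := fun z hz =>
    ((hu z hz.1).continuousAt.add
      ((contDiff_gaussian (n := 0)).continuous.continuousAt.const_smul ε)).continuousWithinAt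
  obtain ⟨m, hm, hmax⟩ := ((isCompact_closedBall w r).diff isOpen_ball).exists_isMaxOn hA hvcont
  intro z hz
  refine (hmax hz).trans (not_lt.1 fun hpos => ?_)
  have hvm : v m = u m + ε * gaussian α w m := rfl
  have hr : dist m w < r := by
    refine (mem_closedBall.1 hm.1).lt_of_ne fun h => ?_
    rw [hvm, gaussian, ← dist_eq_norm, h] at hpos
    linarith [houter m h]
  have hr2 : r / 2 < dist m w := by
    refine (not_lt.1 hm.2).lt_of_ne' fun h => ?_
    nlinarith [hinner m h, gaussian_le_one (w := w) hα m, Real.exp_pos (-α * r ^ 2)]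
  have hlocal : IsLocalMax v m := by
    have hopen : IsOpen (ball w r \ closedBall w (r / 2)) := isOpen_ball.sdiff isClosed_closedBall
    filter_upwards [hopen.mem_nhds ⟨mem_ball.2 hr, fun h => hr2.not_ge (mem_closedBall.1 h)⟩]
      with z hz using hmax ⟨ball_subset_closedBall hz.1, fun h => hz.2 (ball_subset_closedBall h)⟩
  have hum := hu m hm.1
  have hg : ContDiffAt ℝ 2 (gaussian α w) m := contDiff_gaussian.contDiffAt
  have hεg : ContDiffAt ℝ 2 (ε • gaussian α w) m := hg.const_smul ε
  have hΔv : Δ v m = Δ u m + ε * Δ (gaussian α w) m := by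
    rw [hum.laplacian_add hεg, laplacian_smul ε hg, smul_eq_mul]
  have hΔg := mul_gaussian_le_laplacian_gaussian
    (by linarith [dist_nonneg (x := m) (y := w)]) hαr hr2.le
  -- at the interior maximum `Δ v m ≤ 0`, yet `Δ v m ≥ c u m + ε c (gaussian α w m) = c v m > 0`
  have hcv : c * (ε * Real.exp (-α * r ^ 2)) < c * v m := mul_lt_mul_of_pos_left hpos hc
  nlinarith [hlocal.laplacian_nonpos (hum.add hεg), hΔ m hm.1,
    mul_pos hc (mul_pos hε (Real.exp_pos (-α * r ^ 2)))]

theorem hopf_lemma (hr : 0 < r) (hc : 0 < c)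
    (hu : ∀ z ∈ closedBall w r, ContDiffAt ℝ 2 u z)
    (hΔ : ∀ z ∈ closedBall w r, c * u z ≤ Δ u z)
    (hneg : ∀ z ∈ ball w r, u z < 0) (hsphere : ∀ z ∈ sphere w r, u z ≤ 0)
    {p : E} (hp : p ∈ sphere w r) (hup : u p = 0) :
    0 < fderiv ℝ u p (p - w) := by
  have : Nontrivial E := ⟨⟨p, w, ne_of_mem_sphere hp hr.ne'⟩⟩
  have hsub : sphere w (r / 2) ⊆ ball w r := fun z hz => by
    rw [mem_ball, mem_sphere.1 hz]; linarith
  obtain ⟨m₀, hm₀, hm₀max⟩ := (isCompact_sphere w (r / 2)).exists_isMaxOn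
    (NormedSpace.sphere_nonempty.2 (by positivity))
    fun z hz => (hu z (ball_subset_closedBall (hsub hz))).continuousAt.continuousWithinAt
  set ε := -u m₀
  have hε : 0 < ε := neg_pos.2 (hneg m₀ (hsub hm₀))
  set n : ℝ := (Module.finrank ℝ E : ℝ)
  set α := (2 * n + c) / r ^ 2 + 1
  have hα : 1 ≤ α := le_add_of_nonneg_left (by positivity)
  have hαr : 2 * n * α + c ≤ α ^ 2 * r ^ 2 := by
    have : α * r ^ 2 = 2 * n + c + r ^ 2 := by
      rw [add_mul, div_mul_cancel₀ _ (by positivity), one_mul]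
    nlinarith
  have hcomp := add_smul_gaussian_le_on_annulus hc hε (by linarith) hαr hu hΔ hsphere
    fun z hz => (hm₀max hz : u z ≤ u m₀).trans_eq (neg_neg _).symm
  set y := p + (1 / 2 : ℝ) • (w - p)
  have hseg : openSegment ℝ p y ⊆ closedBall w r \ ball w (r / 2) := by
    rw [openSegment_eq_image']
    rintro _ ⟨θ, hθ, rfl⟩
    have hd : dist (p + θ • (y - p)) w = (1 - θ / 2) * r := by
      have : p + θ • (y - p) - w = (1 - θ / 2) • (p - w) := by simp only [y]; module
      rw [dist_eq_norm, this, norm_smul, Real.norm_of_nonneg (by linarith [hθ.2]),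
        ← dist_eq_norm, mem_sphere.1 hp]
    simp only [Set.mem_sdiff, mem_closedBall, mem_ball, hd, not_lt]
    constructor <;> nlinarith [hθ.1, hθ.2]
  -- `u + ε • gaussian α w` is maximal over the annulus at `p`, so its derivative towards `w`
  -- is `≤ 0`, although the Gaussian contributes `ε α r² (gaussian α w p) > 0` to it
  have hmax : IsLocalMaxOn (u + ε • gaussian α w) (closedBall w r \ ball w (r / 2)) p := by
    refine IsMaxOn.localize fun z hz => ?_
    have hgp : gaussian α w p = Real.exp (-α * r ^ 2) := by
      rw [gaussian, ← dist_eq_norm, mem_sphere.1 hp]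
    simpa [hup, hgp] using hcomp z hz
  have hderiv : HasFDerivAt (u + ε • gaussian α w)
      (fderiv ℝ u p + ε • (-2 * α * gaussian α w p) • innerSL ℝ (p - w)) p :=
    ((hu p (sphere_subset_closedBall hp)).differentiableAt (by simp)).hasFDerivAt.add
      ((hasFDerivAt_gaussian p).const_smul ε)
  have hdir := hmax.hasFDerivWithinAt_nonpos hderiv.hasFDerivWithinAt
    (sub_mem_posTangentConeAt_of_openSegment_subset hseg)
  have hy : y - p = (1 / 2 : ℝ) • (w - p) := by simp [y]
  have hinner : inner ℝ (p - w) (w - p) = -r ^ 2 := by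
    rw [← neg_sub p w, inner_neg_right, real_inner_self_eq_norm_sq, ← dist_eq_norm,
      mem_sphere.1 hp]
  rw [hy] at hdir
  simp only [add_apply, smul_apply, map_smul, innerSL_apply_apply, hinner, smul_eq_mul] at hdir
  rw [← neg_sub w p, map_neg]
  have hg := gaussian_pos (α := α) (w := w) p
  nlinarith [mul_pos (mul_pos (mul_pos hε (by linarith : 0 < α)) hg) (pow_pos hr 2)]

end Hopf

section StrongMaximumPrinciple

variable {E : Type*} [NormedAddCommGroup E] [InnerProductSpace ℝ E] [FiniteDimensional ℝ E]
  {u : E → ℝ}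

theorem eventually_eq_zero_of_laplacian_ge {p₀ : E} {c : ℝ} (hc : 0 < c)
    (hu : ∀ᶠ z in 𝓝 p₀, ContDiffAt ℝ 2 u z) (hle : ∀ᶠ z in 𝓝 p₀, u z ≤ 0)
    (hΔ : ∀ᶠ z in 𝓝 p₀, c * u z ≤ Δ u z) (hp₀ : u p₀ = 0) : ∀ᶠ z in 𝓝 p₀, u z = 0 := by
  obtain ⟨ρ, hρ, hball⟩ := eventually_nhds_iff_ball.1 (hu.and (hle.and hΔ))
  refine eventually_nhds_iff_ball.2 ⟨ρ / 4, by positivity, fun w hw => ?_⟩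
  by_contra hw0
  have hB : closedBall p₀ (ρ / 2) ⊆ ball p₀ ρ := closedBall_subset_ball (by linarith)
  set Z := closedBall p₀ (ρ / 2) ∩ u ⁻¹' {0}
  have hZ : IsClosed Z := ContinuousOn.preimage_isClosed_of_isClosed
    (fun z hz => (hball z (hB hz)).1.continuousAt.continuousWithinAt) isClosed_closedBall
    isClosed_singleton
  have hp₀Z : p₀ ∈ Z := ⟨mem_closedBall_self (by positivity), hp₀⟩
  -- the largest ball around `w` free of zeros of `u` touches `Z` at an interior maximum `p`
  obtain ⟨p, hpZ, hpw⟩ := hZ.exists_infDist_eq_dist ⟨p₀, hp₀Z⟩ w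
  set r := infDist w Z
  have hr : 0 < r := (hZ.notMem_iff_infDist_pos ⟨p₀, hp₀Z⟩).1 fun h => hw0 h.2
  have hrρ : r < ρ / 4 := (infDist_le_dist_of_mem hp₀Z).trans_lt (mem_ball.1 hw)
  have hsub' : closedBall w r ⊆ closedBall p₀ (ρ / 2) := fun z hz => by
    rw [mem_closedBall]
    linarith [dist_triangle z w p₀, mem_closedBall.1 hz, mem_ball.1 hw]
  have hsub : closedBall w r ⊆ ball p₀ ρ := hsub'.trans hB
  have hneg : ∀ z ∈ ball w r, u z < 0 := fun z hz => by
    refine ((hball z (hsub (ball_subset_closedBall hz))).2.1).lt_of_ne fun h => ?_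
    have hzZ : z ∈ Z := ⟨hsub' (ball_subset_closedBall hz), h⟩
    exact (infDist_le_dist_of_mem hzZ).not_gt (by rwa [dist_comm, ← mem_ball])
  have hp : p ∈ sphere w r := by rw [mem_sphere, dist_comm, ← hpw]
  have hmax : IsLocalMax u p := by
    filter_upwards [isOpen_ball.mem_nhds (hB hpZ.1)] with z hz
    rw [show u p = 0 from hpZ.2]
    exact (hball z hz).2.1
  have hhopf := hopf_lemma hr hc (fun z hz => (hball z (hsub hz)).1)
    (fun z hz => (hball z (hsub hz)).2.2) hneg
    (fun z hz => (hball z (hsub (sphere_subset_closedBall hz))).2.1) hp hpZ.2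
  rw [hmax.fderiv_eq_zero] at hhopf
  exact lt_irrefl 0 hhopf

theorem eqOn_zero_of_laplacian_ge {U : Set E} {c : E → ℝ} (hU : IsOpen U)
    (hUc : IsPreconnected U) (hu : ContDiffOn ℝ 2 u U) (hc : ContinuousOn c U)
    (hle : ∀ z ∈ U, u z ≤ 0) (hΔ : ∀ z ∈ U, c z * u z ≤ Δ u z) {z₀ : E} (hz₀ : z₀ ∈ U)
    (h0 : u z₀ = 0) : EqOn u 0 U := by
  have hloc : ∀ p ∈ U, u p = 0 → ∀ᶠ z in 𝓝 p, u z = 0 := fun p hp hup => by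
    have hUp := hU.mem_nhds hp
    have hcp : ∀ᶠ z in 𝓝 p, c z < |c p| + 1 :=
      (hc.continuousAt hUp).eventually_lt_const (by linarith [le_abs_self (c p)])
    refine eventually_eq_zero_of_laplacian_ge (c := |c p| + 1) (by positivity)
      (eventually_of_mem hUp fun z hz => hu.contDiffAt (hU.mem_nhds hz))
      (eventually_of_mem hUp hle) ?_ hup
    filter_upwards [hUp, hcp] with z hz hcz
    exact (mul_le_mul_of_nonpos_right hcz.le (hle z hz)).trans (hΔ z hz)
  have hO : U ⊆ {z | ∀ᶠ y in 𝓝 z, u y = 0} := by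
    refine hUc.subset_of_closure_inter_subset isOpen_setOfPred_eventually_nhds
      ⟨z₀, hz₀, hloc z₀ hz₀ h0⟩ fun z ⟨hzcl, hzU⟩ => hloc z hzU ?_
    have hcl := (hu.continuousOn.continuousAt (hU.mem_nhds hzU)).continuousWithinAt
      |>.mem_closure_image hzcl
    exact closure_minimal (image_subset_iff.2 fun y hy => hy.self_of_nhds) isClosed_singleton hcl
  exact fun z hz => (hO hz).self_of_nhds

end StrongMaximumPrinciple

theorem IsCompact.exists_isMaxOn_of_forall_exists_eq {X α : Type*} [TopologicalSpace X]
    [LinearOrder α] [TopologicalSpace α] [ClosedIciTopology α] {U K : Set X} {f : X → α}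
    (hK : IsCompact K) (hKU : K ⊆ U) (hf : ContinuousOn f K) (hU : U.Nonempty)
    (hcover : ∀ z ∈ U, ∃ z' ∈ K, f z' = f z) : ∃ z₀ ∈ U, IsMaxOn f U z₀ := by
  obtain ⟨z, hz⟩ := hU
  obtain ⟨z', hz', -⟩ := hcover z hz
  obtain ⟨z₀, hz₀, hmax⟩ := hK.exists_isMaxOn ⟨z', hz'⟩ hf
  refine ⟨z₀, hKU hz₀, fun y hy => ?_⟩
  obtain ⟨y', hy', hfy⟩ := hcover y hy
  exact show f y ≤ f z₀ from hfy ▸ hmax hy'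

theorem isOpen_UH : IsOpen UH := isOpen_lt continuous_const Complex.continuous_im

theorem isPreconnected_UH : IsPreconnected UH := (convex_halfSpace_im_gt 0).isPreconnected

theorem hypLap_eq_im_sq_mul_laplacian (u : ℂ → ℝ) (z : ℂ) : hypLap u z = z.im ^ 2 * Δ u z := by
  rw [hypLap, laplacian_eq_iteratedFDeriv_complexPlane]

namespace GaussEq

variable {φ : ℂ → ℂ} {t : ℝ} {u : ℂ → ℝ}

theorem im_sq_mul_laplacian (h : GaussEq φ t u) {z : ℂ} (hz : z ∈ UH) :
    z.im ^ 2 * Δ u z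
      = Real.exp (2 * u z) - 1 + t ^ 2 * z.im ^ 4 * ‖φ z‖ ^ 2 * Real.exp (-2 * u z) := by
  linarith [h z hz, hypLap_eq_im_sq_mul_laplacian u z]

theorem exp_sub_one_le_im_sq_mul_laplacian (h : GaussEq φ t u) {z : ℂ} (hz : z ∈ UH) :
    Real.exp (2 * u z) - 1 ≤ z.im ^ 2 * Δ u z := by
  rw [h.im_sq_mul_laplacian hz]
  have : 0 ≤ t ^ 2 * z.im ^ 4 * ‖φ z‖ ^ 2 * Real.exp (-2 * u z) := by positivity
  linarith

theorem nonpos_of_isLocalMax (h : GaussEq φ t u) {z : ℂ} (hz : z ∈ UH) (hu : ContDiffAt ℝ 2 u z)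
    (hmax : IsLocalMax u z) : u z ≤ 0 := by
  have hΔ : z.im ^ 2 * Δ u z ≤ 0 :=
    mul_nonpos_of_nonneg_of_nonpos (sq_nonneg _) (hmax.laplacian_nonpos hu)
  have hexp : Real.exp (2 * u z) ≤ 1 := by linarith [h.exp_sub_one_le_im_sq_mul_laplacian hz]
  linarith [Real.exp_le_one_iff.1 hexp]

theorem two_div_im_sq_mul_le_laplacian (h : GaussEq φ t u) {z : ℂ} (hz : z ∈ UH) :
    2 / z.im ^ 2 * u z ≤ Δ u z := by
  rw [div_mul_eq_mul_div, div_le_iff₀ (pow_pos hz 2), mul_comm (Δ u z)]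
  linarith [Real.add_one_le_exp (2 * u z), h.exp_sub_one_le_im_sq_mul_laplacian hz]

theorem eq_zero_of_eqOn_zero (h : GaussEq φ t u) (hu : EqOn u 0 UH) (ht : t ≠ 0) {z : ℂ}
    (hz : z ∈ UH) : φ z = 0 := by
  have hΔ : Δ u z = 0 := by
    rw [(laplacian_congr_nhds (eventually_of_mem (isOpen_UH.mem_nhds hz) hu)).eq_of_nhds,
      Pi.zero_def, laplacian_const, Pi.zero_apply]
  have heq := h.im_sq_mul_laplacian hz
  rw [hΔ, hu hz, Pi.zero_apply, mul_zero, mul_zero, Real.exp_zero, sub_self, zero_add] at heq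
  have hy : z.im ≠ 0 := ne_of_gt hz
  simpa [ht, hy] using heq.symm

end GaussEq

theorem gauss_solution_negative_general
    (Γ : Subgroup (Matrix.SpecialLinearGroup (Fin 2) ℝ))
    (hcocompact : ∃ K : Set ℂ, K ⊆ UH ∧ IsCompact K ∧ ∀ z ∈ UH, ∃ γ ∈ Γ, moebius γ z ∈ K)
    (φ : ℂ → ℂ)
    (hφne : ∃ z ∈ UH, φ z ≠ 0)
    (t : ℝ) (ht : 0 < t)
    (u : ℂ → ℝ) (hu : ContDiffOn ℝ 2 u UH) (huinv : GammaInv Γ u)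
    (hgauss : GaussEq φ t u) :
    ∀ z ∈ UH, u z < 0 := by
  obtain ⟨K, hKU, hK, hcover⟩ := hcocompact
  obtain ⟨z₀, hz₀, hmax⟩ := hK.exists_isMaxOn_of_forall_exists_eq hKU
    (hu.continuousOn.mono hKU) ⟨Complex.I, by simp [UH]⟩ fun z hz => by
      obtain ⟨γ, hγ, hγz⟩ := hcover z hz
      exact ⟨_, hγz, huinv γ hγ z hz⟩
  have hle : ∀ z ∈ UH, u z ≤ 0 := fun z hz => (hmax hz).trans <|
    hgauss.nonpos_of_isLocalMax hz₀ (hu.contDiffAt (isOpen_UH.mem_nhds hz₀))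
      (hmax.isLocalMax (isOpen_UH.mem_nhds hz₀))
  intro z hz
  refine (hle z hz).lt_of_ne fun hz0 => ?_
  have hzero : EqOn u 0 UH := eqOn_zero_of_laplacian_ge isOpen_UH isPreconnected_UH hu
    (continuousOn_const.div (by fun_prop) fun z hz => pow_ne_zero 2 (ne_of_gt hz)) hle
    (fun z hz => hgauss.two_div_im_sq_mul_le_laplacian hz) hz hz0
  obtain ⟨z₁, hz₁, hφz₁⟩ := hφne
  exact hφz₁ (hgauss.eq_zero_of_eqOn_zero hzero ht.ne' hz₁)

theorem gauss_solution_negative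
    (Γ : Subgroup (Matrix.SpecialLinearGroup (Fin 2) ℝ))
    (hfree : ∀ γ ∈ Γ, γ ≠ 1 → ∀ z ∈ UH, moebius γ z ≠ z)
    (hdisc : ∀ K : Set ℂ, K ⊆ UH → IsCompact K →
      {γ : Matrix.SpecialLinearGroup (Fin 2) ℝ | γ ∈ Γ ∧ ((moebius γ '' K) ∩ K).Nonempty}.Finite)
    (hcocompact : ∃ K : Set ℂ, K ⊆ UH ∧ IsCompact K ∧ ∀ z ∈ UH, ∃ γ ∈ Γ, moebius γ z ∈ K)
    (φ : ℂ → ℂ) (hφ : DifferentiableOn ℂ φ UH)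
    (hφeq : ∀ γ ∈ Γ, ∀ z ∈ UH,
      φ (moebius γ z) = (((γ 1 0 : ℝ) : ℂ) * z + ((γ 1 1 : ℝ) : ℂ)) ^ 4 * φ z)
    (hφne : ∃ z ∈ UH, φ z ≠ 0)
    (t : ℝ) (ht : 0 < t)
    (u : ℂ → ℝ) (hu : ContDiffOn ℝ 2 u UH) (huinv : GammaInv Γ u)
    (hgauss : GaussEq φ t u) :
    ∀ z ∈ UH, u z < 0 :=
  gauss_solution_negative_general Γ hcocompact φ hφne t ht u hu huinv hgauss

end
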